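/- arXiv:2504.21642 — 2 statements merged into one kernel-verified Lean document; each statement's English description precedes it below -/
import Mathlib

section
/- Let u be an arithmetic sequence with ratios b_n and x ∈ [0,1) with support S. Let k ∈ ℕ and L ⊆ ℕ infinite with ⋃_{j=0}^k (L+j) disjoint from S. If b_n → ∞ along n ∈ L + k, then ‖u_{n−1}x‖ → 0 along n ∈ L. -/
open Filter Finset

/-! For `n ∈ L` the digits `c n, …, c (n + k)` vanish, so `u (n - 1) * x` is an integer plus
`u (n - 1)` times the tail of the series starting at index `n + k + 1`. Since `c i ≤ b i - 1`,
the tails telescope and the one starting at `n + k + 1` is at most `1 / u (n + k)`, so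
`‖u (n - 1) x‖ ≤ u (n - 1) / u (n + k) ≤ 1 / b (n + k)`. -/

theorem sum_range_nat_add_le_of_le_sub_succ {f g : ℕ → ℝ} (hg : ∀ i, 0 ≤ g i)
    (hfg : ∀ i, f i ≤ g i - g (i + 1)) (m N : ℕ) :
    ∑ i ∈ range N, f (i + m) ≤ g m :=
  calc ∑ i ∈ range N, f (i + m)
      ≤ ∑ i ∈ range N, (g (i + m) - g (i + 1 + m)) :=
        sum_le_sum fun i _ => by simpa only [add_right_comm] using hfg (i + m)
    _ = g m - g (N + m) := by rw [sum_range_sub' (fun i => g (i + m)), zero_add]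
    _ ≤ g m := sub_le_self _ (hg _)

theorem summable_of_le_sub_succ {f g : ℕ → ℝ} (hf : ∀ i, 0 ≤ f i) (hg : ∀ i, 0 ≤ g i)
    (hfg : ∀ i, f i ≤ g i - g (i + 1)) : Summable f :=
  summable_of_sum_range_le hf (sum_range_nat_add_le_of_le_sub_succ hg hfg 0)

theorem tsum_nat_add_le_of_le_sub_succ {f g : ℕ → ℝ} (hf : ∀ i, 0 ≤ f i) (hg : ∀ i, 0 ≤ g i)
    (hfg : ∀ i, f i ≤ g i - g (i + 1)) (m : ℕ) : ∑' i, f (i + m) ≤ g m :=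
  Real.tsum_le_of_sum_range_le (fun i => hf (i + m)) (sum_range_nat_add_le_of_le_sub_succ hg hfg m)

theorem natCast_div_mul_le_inv_sub_inv {c b : ℕ} (hcb : c < b) {v : ℝ} (hv : 0 < v) :
    (c : ℝ) / (b * v) ≤ 1 / v - 1 / (b * v) := by
  have hb : (1 : ℝ) ≤ b := by exact_mod_cast hcb.pos
  have hc : (c : ℝ) ≤ b - 1 := by
    rw [le_sub_iff_add_le]; exact_mod_cast hcb
  calc (c : ℝ) / (b * v) ≤ (b - 1) / (b * v) := by gcongr
    _ = 1 / v - 1 / (b * v) := by field_simp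

section SuccEqMul

variable {u b : ℕ → ℕ}

theorem pos_of_strictMono_of_succ_eq_mul (humono : StrictMono u)
    (hb : ∀ n, u (n + 1) = b (n + 1) * u n) (n : ℕ) : 0 < u n := by
  have hu0 : 0 < u 0 := by
    by_contra! h
    have h1 := humono (Nat.zero_lt_one)
    rw [hb 0, Nat.le_zero.mp h, mul_zero] at h1
    exact lt_irrefl _ h1
  exact hu0.trans_le (humono.monotone (Nat.zero_le n))

theorem dvd_of_le_of_succ_eq_mul (hb : ∀ n, u (n + 1) = b (n + 1) * u n) {i j : ℕ}
    (hij : i ≤ j) : u i ∣ u j := by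
  induction j, hij using Nat.le_induction with
  | base => exact dvd_rfl
  | succ j _ ih => exact ih.trans ⟨b (j + 1), by rw [hb, mul_comm]⟩

theorem exists_natCast_eq_mul_sum_range (hpos : ∀ n, 0 < u n)
    (hb : ∀ n, u (n + 1) = b (n + 1) * u n) (c : ℕ → ℕ) (m : ℕ) :
    ∃ A : ℕ, (A : ℝ) = u m * ∑ i ∈ range m, (c (i + 1) : ℝ) / u (i + 1) := by
  refine ⟨∑ i ∈ range m, u m / u (i + 1) * c (i + 1), ?_⟩
  simp only [Nat.cast_sum, Nat.cast_mul, mul_sum]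
  refine sum_congr rfl fun i hi => ?_
  rw [Nat.cast_div (dvd_of_le_of_succ_eq_mul hb (mem_range.mp hi))
    (Nat.cast_ne_zero.mpr (hpos _).ne')]
  ring

theorem abs_mul_sub_round_le_of_digits_eq_zero {c : ℕ → ℕ} {x : ℝ} (humono : StrictMono u)
    (hb : ∀ n, u (n + 1) = b (n + 1) * u n)
    (hsum : x = ∑' n : ℕ, (c (n + 1) : ℝ) / (u (n + 1) : ℝ))
    (hclt : ∀ n, c (n + 1) < b (n + 1)) {m k : ℕ} (hgap : ∀ j ≤ k, c (m + 1 + j) = 0) :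
    |(u m : ℝ) * x - round ((u m : ℝ) * x)| ≤ 1 / b (m + k + 1) := by
  have hpos := pos_of_strictMono_of_succ_eq_mul humono hb
  have hpos' : ∀ n, (0 : ℝ) < u n := fun n => Nat.cast_pos.mpr (hpos n)
  set f : ℕ → ℝ := fun i => (c (i + 1) : ℝ) / u (i + 1)
  have hf : ∀ i, 0 ≤ f i := fun i => div_nonneg (Nat.cast_nonneg _) (hpos' _).le
  have hg : ∀ i, (0 : ℝ) ≤ 1 / u i := fun i => (one_div_pos.mpr (hpos' i)).le
  have hfg : ∀ i, f i ≤ 1 / u i - 1 / u (i + 1) := fun i => by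
    simpa only [f, hb i, Nat.cast_mul] using natCast_div_mul_le_inv_sub_inv (hclt i) (hpos' i)
  set T := ∑' i, f (i + (m + (k + 1)))
  have hT : T ≤ 1 / u (m + (k + 1)) := tsum_nat_add_le_of_le_sub_succ hf hg hfg _
  have hblock : ∑ j ∈ range (k + 1), f (m + j) = 0 :=
    sum_eq_zero fun j hj => by
      simp only [f, add_right_comm m j 1, hgap j (Nat.lt_succ_iff.mp (mem_range.mp hj)),
        Nat.cast_zero, zero_div]
  obtain ⟨A, hA⟩ := exists_natCast_eq_mul_sum_range hpos hb c m
  have hsplit : (u m : ℝ) * x = A + u m * T := by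
    rw [hsum, ← (summable_of_le_sub_succ hf hg hfg).sum_add_tsum_nat_add (m + (k + 1)),
      sum_range_add, hblock, add_zero, mul_add, hA]
  have hu : (u m : ℝ) ≤ u (m + k) := by exact_mod_cast humono.monotone (Nat.le_add_right m k)
  calc |(u m : ℝ) * x - round ((u m : ℝ) * x)|
      ≤ |(u m : ℝ) * x - ((A : ℤ) : ℝ)| := round_le _ _
    _ = u m * T := by
        rw [hsplit, Int.cast_natCast, add_sub_cancel_left,
          abs_of_nonneg (mul_nonneg (hpos' m).le (tsum_nonneg fun i => hf (i + (m + (k + 1)))))]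
    _ ≤ u m * (1 / (b (m + k + 1) * u (m + k))) := by
        rw [← add_assoc, hb, Nat.cast_mul] at hT
        gcongr
    _ = u m / u (m + k) / b (m + k + 1) := by ring
    _ ≤ 1 / b (m + k + 1) := by
        gcongr
        exact div_le_one_of_le₀ hu (hpos' _).le

end SuccEqMul

theorem stmt_13_general (u b c : ℕ → ℕ) (x : ℝ)
    (humono : StrictMono u)
    (hb : ∀ n, u (n + 1) = b (n + 1) * u n)
    (hsum : x = ∑' n : ℕ, (c (n + 1) : ℝ) / (u (n + 1) : ℝ))
    (hclt : ∀ n, c (n + 1) < b (n + 1))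
    (k : ℕ) (L : Set ℕ)
    (hdisj : ∀ n ∈ L, ∀ j ≤ k, c (n + j) = 0)
    (hdiv : Tendsto (fun n : ℕ => b (n + k)) (atTop ⊓ 𝓟 L) atTop) :
    Tendsto (fun n : ℕ => |(u (n - 1) : ℝ) * x - (round ((u (n - 1) : ℝ) * x) : ℝ)|)
      (atTop ⊓ 𝓟 L) (nhds 0) := by
  have hbound : ∀ᶠ n in atTop ⊓ 𝓟 L,
      |(u (n - 1) : ℝ) * x - (round ((u (n - 1) : ℝ) * x) : ℝ)| ≤ 1 / (b (n + k) : ℝ) := by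
    rw [eventually_inf_principal]
    filter_upwards [eventually_ge_atTop 1] with n hn hnL
    obtain ⟨m, rfl⟩ := Nat.exists_eq_add_of_le' hn
    simpa only [Nat.add_sub_cancel, add_right_comm m k 1] using
      abs_mul_sub_round_le_of_digits_eq_zero humono hb hsum hclt (hdisj _ hnL)
  have hinv : Tendsto (fun n => 1 / (b (n + k) : ℝ)) (atTop ⊓ 𝓟 L) (nhds 0) := by
    exact (tendsto_natCast_atTop_atTop.comp hdiv).inv_tendsto_atTop.congr fun n => (one_div _).symm
  exact squeeze_zero' (Eventually.of_forall fun n => abs_nonneg _) hbound hinv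

/-- Claim DDU(b): if `L` is infinite, `⋃_{j≤k}(L+j)` is disjoint from the support of `x`,
and `b_n → ∞` along `L + k`, then `‖u_{n-1} x‖ → 0` along `L`. -/
theorem stmt_13 (u b c : ℕ → ℕ) (x : ℝ)
    (hu0 : u 0 = 1) (humono : StrictMono u)
    (hb : ∀ n, u (n + 1) = b (n + 1) * u n)
    (hx0 : 0 ≤ x) (hx1 : x < 1)
    (hc0 : c 0 = 0)
    (hsum : x = ∑' n : ℕ, (c (n + 1) : ℝ) / (u (n + 1) : ℝ))
    (hclt : ∀ n, c (n + 1) < b (n + 1))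
    (hcinf : {n : ℕ | c (n + 1) + 1 < b (n + 1)}.Infinite)
    (k : ℕ) (L : Set ℕ) (hL : L.Infinite)
    (hdisj : ∀ n ∈ L, ∀ j ≤ k, c (n + j) = 0)
    (hdiv : Tendsto (fun n : ℕ => b (n + k)) (atTop ⊓ 𝓟 L) atTop) :
    Tendsto (fun n : ℕ => |(u (n - 1) : ℝ) * x - (round ((u (n - 1) : ℝ) * x) : ℝ)|)
      (atTop ⊓ 𝓟 L) (nhds 0) :=
  stmt_13_general u b c x humono hb hsum hclt k L hdisj hdiv
end

section
/- Let u be an arithmetic sequence and I₁, I₂ translation invariant free ideals of ℕ with I₂ ⊄ I₁. Then there exists x ∈ ℝ/ℤ such that u_n x I₂-converges to 0 but does not I₁-converge to 0; hence the I₂-characterized subgroup t_u^{I₂}(𝕋) is not contained in t_u^{I₁}(𝕋). -/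
/-!
Pick `A ∈ I₂ \ I₁`; one residue class of `A` modulo `5` is a set `S ∉ I₁` (and `S ∈ I₂`) whose
elements are at least `5` apart. With `q k = u (k + 1) / u k ≥ 2`, let
`x = ∑_{k ∈ S} ⌊q k / 2⌋ / u (k + 1)`. Since `u (k + 1) ∣ u n` for `k < n`, `u n * x` is congruent
modulo `1` to the tail `∑_{k ≥ n, k ∈ S} u n ⌊q k / 2⌋ / u (k + 1)`, whose term of index `n + k` is
at most `2⁻¹ ^ (k + 1)`. For `n ∈ S` the first term lies in `[1/3, 1/2]` and, by sparseness, the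
rest is at most `1/16`, so `‖u n x‖ ≥ 1/3` on `S ∉ I₁`. If `S` misses `[n, n + J]` the tail is at
most `2⁻¹ ^ (J + 1)`, and the `n` for which `S` meets `[n, n + J]` form a finite union of translates
of `S`, which lies in `I₂`.
-/

open Finset

theorem biUnion_mem_of_union_mem {α ι : Type*} {I : Set (Set α)}
    (hunion : ∀ A B : Set α, A ∈ I → B ∈ I → A ∪ B ∈ I) {s : Finset ι} (hs : s.Nonempty)
    {A : ι → Set α} (hA : ∀ i ∈ s, A i ∈ I) : ⋃ i ∈ s, A i ∈ I := by
  induction hs using Finset.Nonempty.cons_induction with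
  | singleton a => simpa using hA a (mem_singleton_self a)
  | cons a s _ _ ih =>
    classical
    rw [cons_eq_insert, set_biUnion_insert]
    exact hunion _ _ (hA a (mem_cons_self a s)) (ih fun i hi => hA i (mem_cons_of_mem hi))

theorem exists_sparse_subset_not_mem {I : Set (Set ℕ)}
    (hunion : ∀ A B : Set ℕ, A ∈ I → B ∈ I → A ∪ B ∈ I) {A : Set ℕ} (hA : A ∉ I) {g : ℕ}
    (hg : 0 < g) : ∃ S ⊆ A, S ∉ I ∧ ∀ a ∈ S, ∀ b ∈ S, a < b → a + g ≤ b := by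
  have hcover : A = ⋃ r ∈ range g, {a ∈ A | a % g = r} := by
    ext a
    simp [Nat.mod_lt _ hg]
  obtain ⟨r, -, hr⟩ : ∃ r ∈ range g, {a ∈ A | a % g = r} ∉ I := by
    by_contra! h
    exact hA (hcover ▸ biUnion_mem_of_union_mem hunion ⟨0, mem_range.2 hg⟩ h)
  refine ⟨_, fun a ha => ha.1, hr, ?_⟩
  rintro a ⟨-, rfl⟩ b ⟨-, hb⟩ hab
  have hdvd : g ∣ b - a := (Nat.modEq_iff_dvd' hab.le).1 hb.symm
  have := Nat.le_of_dvd (Nat.sub_pos_of_lt hab) hdvd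
  omega

theorem setOf_add_mem_mem {I : Set (Set ℕ)}
    (htrans : ∀ A ∈ I, ∀ z : ℤ, {m : ℕ | ∃ a ∈ A, (a : ℤ) + z = (m : ℤ)} ∈ I) {S : Set ℕ}
    (hS : S ∈ I) (j : ℕ) : {n | n + j ∈ S} ∈ I := by
  convert htrans S hS (-j) using 1
  ext m
  constructor
  · intro hm
    exact ⟨m + j, hm, by push_cast; ring⟩
  · rintro ⟨a, ha, h⟩
    rwa [Set.mem_ofPred_eq, show m + j = a by omega]

theorem setOf_exists_add_mem_mem {I : Set (Set ℕ)}
    (hunion : ∀ A B : Set ℕ, A ∈ I → B ∈ I → A ∪ B ∈ I)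
    (htrans : ∀ A ∈ I, ∀ z : ℤ, {m : ℕ | ∃ a ∈ A, (a : ℤ) + z = (m : ℤ)} ∈ I) {S : Set ℕ}
    (hS : S ∈ I) (J : ℕ) : {n | ∃ j ≤ J, n + j ∈ S} ∈ I := by
  have h := biUnion_mem_of_union_mem hunion nonempty_range_add_one
    fun j (_ : j ∈ range (J + 1)) => setOf_add_mem_mem htrans hS j
  convert h using 1
  ext n
  simp

section DivisibilityChain

variable {u : ℕ → ℕ}

theorem pos_of_strictMono_of_dvd (humono : StrictMono u) (hdvd : ∀ n, u n ∣ u (n + 1)) (n : ℕ) :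
    0 < u n := by
  have h0 : u 0 ≠ 0 := fun h => by
    have h1 : u 1 = 0 := zero_dvd_iff.1 (h ▸ hdvd 0)
    exact absurd (humono zero_lt_one) (by omega)
  exact (Nat.pos_of_ne_zero h0).trans_le (humono.monotone n.zero_le)

theorem two_le_div_of_strictMono_of_dvd (humono : StrictMono u) (hdvd : ∀ n, u n ∣ u (n + 1))
    (n : ℕ) : 2 ≤ u (n + 1) / u n := by
  obtain ⟨m, hm⟩ := hdvd n
  have hpos := pos_of_strictMono_of_dvd humono hdvd n
  have hlt : u n * 1 < u n * m := by simpa [← hm] using humono n.lt_add_one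
  rw [hm, Nat.mul_div_cancel_left _ hpos]
  have := lt_of_mul_lt_mul_left hlt
  omega

theorem two_pow_mul_le_of_strictMono_of_dvd (humono : StrictMono u)
    (hdvd : ∀ n, u n ∣ u (n + 1)) (n k : ℕ) : 2 ^ k * u n ≤ u (k + n) := by
  induction k with
  | zero => simp
  | succ k ih =>
    have h2 := two_le_div_of_strictMono_of_dvd humono hdvd (k + n)
    have hq := Nat.div_mul_cancel (hdvd (k + n))
    calc 2 ^ (k + 1) * u n = 2 * (2 ^ k * u n) := by ring
      _ ≤ (u (k + n + 1) / u (k + n)) * u (k + n) := Nat.mul_le_mul h2 ih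
      _ = u (k + 1 + n) := by rw [hq, Nat.add_right_comm]

theorem dvd_of_le_of_dvd_succ (hdvd : ∀ n, u n ∣ u (n + 1)) {m n : ℕ} (hmn : m ≤ n) :
    u m ∣ u n :=
  Nat.rel_of_forall_rel_succ_of_le (· ∣ ·) hdvd hmn

def digit (u : ℕ → ℕ) (k : ℕ) : ℕ := u (k + 1) / u k / 2

theorem two_mul_digit_mul_le (hdvd : ∀ n, u n ∣ u (n + 1)) (k : ℕ) :
    2 * digit u k * u k ≤ u (k + 1) :=
  calc 2 * digit u k * u k ≤ u (k + 1) / u k * u k :=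
        Nat.mul_le_mul_right _ (Nat.mul_div_le _ 2)
    _ = u (k + 1) := Nat.div_mul_cancel (hdvd k)

theorem le_three_mul_digit_mul (humono : StrictMono u) (hdvd : ∀ n, u n ∣ u (n + 1)) (k : ℕ) :
    u (k + 1) ≤ 3 * digit u k * u k := by
  have h2 := two_le_div_of_strictMono_of_dvd humono hdvd k
  calc u (k + 1) = u (k + 1) / u k * u k := (Nat.div_mul_cancel (hdvd k)).symm
    _ ≤ 3 * digit u k * u k := Nat.mul_le_mul_right _ (by unfold digit; omega)

theorem two_pow_succ_mul_digit_le (humono : StrictMono u) (hdvd : ∀ n, u n ∣ u (n + 1))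
    (n k : ℕ) : 2 ^ (k + 1) * (u n * digit u (k + n)) ≤ u (k + n + 1) :=
  calc 2 ^ (k + 1) * (u n * digit u (k + n)) = 2 * digit u (k + n) * (2 ^ k * u n) := by ring
    _ ≤ 2 * digit u (k + n) * u (k + n) :=
        Nat.mul_le_mul_left _ (two_pow_mul_le_of_strictMono_of_dvd humono hdvd n k)
    _ ≤ u (k + n + 1) := two_mul_digit_mul_le hdvd _

end DivisibilityChain

theorem abs_sub_round_intCast_add {α : Type*} [Ring α] [LinearOrder α] [IsStrictOrderedRing α]
    [FloorRing α] (N : ℤ) (r : α) : |N + r - round (N + r)| = |r - round r| := by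
  rw [round_intCast_add, Int.cast_add, add_sub_add_left_eq_sub]

theorem le_abs_sub_intCast {α : Type*} [CommRing α] [LinearOrder α] [IsStrictOrderedRing α]
    {δ r : α} (h₁ : δ ≤ r) (h₂ : r ≤ 1 - δ) (z : ℤ) : δ ≤ |r - z| := by
  rcases le_or_gt z 0 with hz | hz
  · have : (z : α) ≤ 0 := by exact_mod_cast hz
    exact le_abs.2 (Or.inl (by linarith))
  · have : (1 : α) ≤ z := by exact_mod_cast hz
    exact le_abs.2 (Or.inr (by linarith))

theorem summable_half_pow_succ : Summable fun k : ℕ => ((1 : ℝ) / 2) ^ (k + 1) :=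
  (summable_nat_add_iff 1).2 summable_geometric_two

theorem tsum_le_half_pow_of_eq_zero {f : ℕ → ℝ} (h0 : ∀ k, 0 ≤ f k)
    (hle : ∀ k, f k ≤ (1 / 2) ^ (k + 1)) {J : ℕ} (hJ : ∀ k < J, f k = 0) :
    ∑' k, f k ≤ (1 / 2) ^ J := by
  have hsum : Summable f := .of_nonneg_of_le h0 hle summable_half_pow_succ
  rw [← hsum.sum_add_tsum_nat_add J, sum_eq_zero fun k hk => hJ k (mem_range.1 hk), zero_add]
  calc ∑' k, f (k + J) ≤ ∑' k : ℕ, (1 / 2 : ℝ) ^ J / 2 / 2 ^ k :=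
        ((summable_nat_add_iff J).2 hsum).tsum_le_tsum
          (fun k => (hle (k + J)).trans_eq (by rw [one_div_pow, one_div_pow]; field_simp; ring))
          (summable_geometric_two' _)
    _ = (1 / 2) ^ J := tsum_geometric_two' _

section DigitSeries

variable {u : ℕ → ℕ} {S : Set ℕ}

noncomputable def digitTerm (u : ℕ → ℕ) (S : Set ℕ) (k : ℕ) : ℝ :=
  S.indicator (fun k => (digit u k : ℝ) / u (k + 1)) k

noncomputable def digitSeries (u : ℕ → ℕ) (S : Set ℕ) : ℝ :=
  ∑' k, digitTerm u S k

noncomputable def digitTail (u : ℕ → ℕ) (S : Set ℕ) (n : ℕ) : ℝ :=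
  ∑' k, u n * digitTerm u S (k + n)

theorem digitTerm_nonneg (k : ℕ) : 0 ≤ digitTerm u S k :=
  Set.indicator_nonneg (fun _ _ => by positivity) k

theorem mul_digitTerm_nonneg (n k : ℕ) : 0 ≤ u n * digitTerm u S k :=
  mul_nonneg (Nat.cast_nonneg _) (digitTerm_nonneg k)

theorem digitTerm_of_notMem {k : ℕ} (hk : k ∉ S) : digitTerm u S k = 0 :=
  Set.indicator_of_notMem hk _

theorem mul_digitTerm_le (humono : StrictMono u) (hdvd : ∀ n, u n ∣ u (n + 1)) (n k : ℕ) :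
    u n * digitTerm u S (k + n) ≤ (1 / 2) ^ (k + 1) := by
  by_cases hk : k + n ∈ S
  · have h := two_pow_succ_mul_digit_le humono hdvd n k
    have hpos : (0 : ℝ) < u (k + n + 1) := by
      exact_mod_cast pos_of_strictMono_of_dvd humono hdvd _
    rw [digitTerm, Set.indicator_of_mem hk, mul_div_assoc', div_le_iff₀ hpos, one_div, inv_pow,
      inv_mul_eq_div, le_div_iff₀ (by positivity), mul_comm]
    exact_mod_cast h
  · rw [digitTerm_of_notMem hk, mul_zero]
    positivity

theorem one_third_le_mul_digitTerm (humono : StrictMono u) (hdvd : ∀ n, u n ∣ u (n + 1))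
    {n : ℕ} (hn : n ∈ S) : 1 / 3 ≤ u n * digitTerm u S n := by
  have h : (u (n + 1) : ℝ) ≤ 3 * digit u n * u n := by
    exact_mod_cast le_three_mul_digit_mul humono hdvd n
  have hpos : (0 : ℝ) < u (n + 1) := by exact_mod_cast pos_of_strictMono_of_dvd humono hdvd _
  rw [digitTerm, Set.indicator_of_mem hn, mul_div_assoc', le_div_iff₀ hpos]
  linarith

theorem summable_digitTerm (humono : StrictMono u) (hdvd : ∀ n, u n ∣ u (n + 1)) :
    Summable (digitTerm u S) := by
  have hu0 : (1 : ℝ) ≤ u 0 := by exact_mod_cast pos_of_strictMono_of_dvd humono hdvd 0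
  refine .of_nonneg_of_le digitTerm_nonneg (fun k => ?_) summable_half_pow_succ
  calc digitTerm u S k ≤ u 0 * digitTerm u S (k + 0) :=
        le_mul_of_one_le_left (digitTerm_nonneg k) hu0
    _ ≤ (1 / 2) ^ (k + 1) := mul_digitTerm_le humono hdvd 0 k

theorem exists_int_mul_digitTerm (humono : StrictMono u) (hdvd : ∀ n, u n ∣ u (n + 1))
    {n k : ℕ} (hkn : k < n) : ∃ N : ℤ, u n * digitTerm u S k = N := by
  by_cases hk : k ∈ S
  · have hpos : (u (k + 1) : ℝ) ≠ 0 := by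
      exact_mod_cast (pos_of_strictMono_of_dvd humono hdvd _).ne'
    obtain ⟨m, hm⟩ := dvd_of_le_of_dvd_succ hdvd hkn
    refine ⟨m * digit u k, ?_⟩
    rw [digitTerm, Set.indicator_of_mem hk, hm]
    push_cast
    field_simp
  · exact ⟨0, by rw [digitTerm_of_notMem hk, mul_zero, Int.cast_zero]⟩

theorem exists_int_mul_digitSeries_eq (humono : StrictMono u) (hdvd : ∀ n, u n ∣ u (n + 1))
    (n : ℕ) : ∃ N : ℤ, u n * digitSeries u S = N + digitTail u S n := by
  have hsum := (summable_digitTerm humono hdvd (S := S)).mul_left (u n : ℝ)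
  obtain ⟨N, hN⟩ : ∃ N : ℤ, ∑ k ∈ range n, (u n : ℝ) * digitTerm u S k = N :=
    sum_induction _ (fun y : ℝ => ∃ N : ℤ, y = N)
      (fun _ _ ⟨a, ha⟩ ⟨b, hb⟩ => ⟨a + b, by rw [ha, hb, Int.cast_add]⟩) ⟨0, Int.cast_zero.symm⟩
      fun k hk => exists_int_mul_digitTerm humono hdvd (mem_range.1 hk)
  refine ⟨N, ?_⟩
  rw [digitSeries, ← tsum_mul_left, ← hsum.sum_add_tsum_nat_add n, hN, digitTail]

theorem abs_sub_round_mul_digitSeries (humono : StrictMono u) (hdvd : ∀ n, u n ∣ u (n + 1))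
    (n : ℕ) : |u n * digitSeries u S - round (u n * digitSeries u S)| =
      |digitTail u S n - round (digitTail u S n)| := by
  obtain ⟨N, hN⟩ := exists_int_mul_digitSeries_eq humono hdvd (S := S) n
  rw [hN, abs_sub_round_intCast_add]

theorem digitTail_nonneg (n : ℕ) : 0 ≤ digitTail u S n :=
  tsum_nonneg fun _ => mul_digitTerm_nonneg _ _

theorem digitTail_le (humono : StrictMono u) (hdvd : ∀ n, u n ∣ u (n + 1)) {n J : ℕ}
    (hS : ∀ k < J, k + n ∉ S) : digitTail u S n ≤ (1 / 2) ^ J :=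
  tsum_le_half_pow_of_eq_zero (fun _ => mul_digitTerm_nonneg _ _)
    (mul_digitTerm_le humono hdvd n) fun k hk => by rw [digitTerm_of_notMem (hS k hk), mul_zero]

theorem digitTail_mem_Icc (humono : StrictMono u) (hdvd : ∀ n, u n ∣ u (n + 1)) {n : ℕ}
    (hn : n ∈ S) (hsparse : ∀ m ∈ S, n < m → n + 5 ≤ m) :
    digitTail u S n ∈ Set.Icc (1 / 3) (9 / 16) := by
  have hsum : Summable fun k => (u n : ℝ) * digitTerm u S (k + n) :=
    ((summable_nat_add_iff n).2 (summable_digitTerm humono hdvd)).mul_left _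
  have hlead := mul_digitTerm_le humono hdvd (S := S) n 0
  have hrest : ∑' k, (u n : ℝ) * digitTerm u S (k + 1 + n) ≤ (1 / 2) ^ 4 :=
    tsum_le_half_pow_of_eq_zero (fun _ => mul_digitTerm_nonneg _ _)
      (fun k => (mul_digitTerm_le humono hdvd n (k + 1)).trans
        (pow_le_pow_of_le_one (by norm_num) (by norm_num) (by omega)))
      fun k hk => by
        rw [digitTerm_of_notMem fun hmem => by have := hsparse _ hmem (by omega); omega, mul_zero]
  have hrest₀ : 0 ≤ ∑' k, (u n : ℝ) * digitTerm u S (k + 1 + n) :=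
    tsum_nonneg fun _ => mul_digitTerm_nonneg _ _
  have hlow := one_third_le_mul_digitTerm humono hdvd hn
  rw [digitTail, hsum.tsum_eq_zero_add, zero_add]
  rw [zero_add] at hlead
  constructor <;> norm_num at hlead hrest ⊢ <;> linarith

theorem abs_sub_round_mul_digitSeries_le (humono : StrictMono u) (hdvd : ∀ n, u n ∣ u (n + 1))
    {n J : ℕ} (hS : ∀ k < J, k + n ∉ S) :
    |u n * digitSeries u S - round (u n * digitSeries u S)| ≤ (1 / 2) ^ J := by
  rw [abs_sub_round_mul_digitSeries humono hdvd]
  calc _ ≤ |digitTail u S n - (0 : ℤ)| := round_le _ 0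
    _ = digitTail u S n := by rw [Int.cast_zero, sub_zero, abs_of_nonneg (digitTail_nonneg n)]
    _ ≤ (1 / 2) ^ J := digitTail_le humono hdvd hS

theorem one_third_le_abs_sub_round_mul_digitSeries (humono : StrictMono u)
    (hdvd : ∀ n, u n ∣ u (n + 1)) {n : ℕ} (hn : n ∈ S) (hsparse : ∀ m ∈ S, n < m → n + 5 ≤ m) :
    1 / 3 ≤ |u n * digitSeries u S - round (u n * digitSeries u S)| := by
  obtain ⟨hlow, hhigh⟩ := digitTail_mem_Icc humono hdvd hn hsparse
  rw [abs_sub_round_mul_digitSeries humono hdvd]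
  exact le_abs_sub_intCast hlow (by linarith) _

end DigitSeries

theorem stmt_18_general (u : ℕ → ℕ)
    (humono : StrictMono u)
    (hdvd : ∀ n, u n ∣ u (n + 1))
    (I₁ I₂ : Set (Set ℕ))
    (hunion₁ : ∀ A B : Set ℕ, A ∈ I₁ → B ∈ I₁ → A ∪ B ∈ I₁)
    (hsubset₁ : ∀ A B : Set ℕ, A ⊆ B → B ∈ I₁ → A ∈ I₁)
    (hunion₂ : ∀ A B : Set ℕ, A ∈ I₂ → B ∈ I₂ → A ∪ B ∈ I₂)
    (hsubset₂ : ∀ A B : Set ℕ, A ⊆ B → B ∈ I₂ → A ∈ I₂)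
    (htrans₂ : ∀ A ∈ I₂, ∀ z : ℤ, {m : ℕ | ∃ a ∈ A, (a : ℤ) + z = (m : ℤ)} ∈ I₂)
    (hnsub : ¬ I₂ ⊆ I₁) :
    ∃ x : ℝ,
      (∀ ε : ℝ, 0 < ε →
        {n : ℕ | ε ≤ |(u n : ℝ) * x - (round ((u n : ℝ) * x) : ℝ)|} ∈ I₂) ∧
      ¬ (∀ ε : ℝ, 0 < ε →
        {n : ℕ | ε ≤ |(u n : ℝ) * x - (round ((u n : ℝ) * x) : ℝ)|} ∈ I₁) := by
  obtain ⟨A, hA₂, hA₁⟩ := Set.not_subset.1 hnsub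
  obtain ⟨S, hSA, hS₁, hsparse⟩ := exists_sparse_subset_not_mem hunion₁ hA₁ (g := 5) (by norm_num)
  have hS₂ : S ∈ I₂ := hsubset₂ S A hSA hA₂
  refine ⟨digitSeries u S, fun ε hε => ?_, fun hconv => hS₁ ?_⟩
  · obtain ⟨J, hJ⟩ := exists_pow_lt_of_lt_one hε (by norm_num : (1 / 2 : ℝ) < 1)
    refine hsubset₂ _ _ (fun n hn => ?_) (setOf_exists_add_mem_mem hunion₂ htrans₂ hS₂ J)
    rw [Set.mem_ofPred_eq] at hn ⊢
    by_contra! hfar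
    have hsmall := abs_sub_round_mul_digitSeries_le humono hdvd (J := J + 1) fun k hk => by
      rw [add_comm]; exact hfar k (by omega)
    have hhalf : ((1 : ℝ) / 2) ^ (J + 1) ≤ (1 / 2) ^ J :=
      pow_le_pow_of_le_one (by norm_num) (by norm_num) J.le_succ
    linarith
  · exact hsubset₁ _ _ (fun n hn => one_third_le_abs_sub_round_mul_digitSeries humono hdvd hn
      (hsparse n hn)) (hconv (1 / 3) (by norm_num))

/-- If `I₁, I₂` are translation invariant proper free ideals of `ℕ` with `I₂ ⊄ I₁`, then
there is `x ∈ ℝ/ℤ` (represented by a real `x`) with `u_n x` `I₂`-converging to `0` but not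
`I₁`-converging to `0`; hence `t_u^{I₂}(𝕋) ⊄ t_u^{I₁}(𝕋)`. -/
theorem stmt_18 (u : ℕ → ℕ)
    (hu0 : u 0 = 1) (humono : StrictMono u)
    (hdvd : ∀ n, u n ∣ u (n + 1))
    (I₁ I₂ : Set (Set ℕ))
    (hne₁ : I₁.Nonempty)
    (hunion₁ : ∀ A B : Set ℕ, A ∈ I₁ → B ∈ I₁ → A ∪ B ∈ I₁)
    (hsubset₁ : ∀ A B : Set ℕ, A ⊆ B → B ∈ I₁ → A ∈ I₁)
    (hfree₁ : ∀ A : Set ℕ, A.Finite → A ∈ I₁)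
    (hproper₁ : Set.univ ∉ I₁)
    (htrans₁ : ∀ A ∈ I₁, ∀ z : ℤ, {m : ℕ | ∃ a ∈ A, (a : ℤ) + z = (m : ℤ)} ∈ I₁)
    (hne₂ : I₂.Nonempty)
    (hunion₂ : ∀ A B : Set ℕ, A ∈ I₂ → B ∈ I₂ → A ∪ B ∈ I₂)
    (hsubset₂ : ∀ A B : Set ℕ, A ⊆ B → B ∈ I₂ → A ∈ I₂)
    (hfree₂ : ∀ A : Set ℕ, A.Finite → A ∈ I₂)
    (hproper₂ : Set.univ ∉ I₂)
    (htrans₂ : ∀ A ∈ I₂, ∀ z : ℤ, {m : ℕ | ∃ a ∈ A, (a : ℤ) + z = (m : ℤ)} ∈ I₂)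
    (hnsub : ¬ I₂ ⊆ I₁) :
    ∃ x : ℝ,
      (∀ ε : ℝ, 0 < ε →
        {n : ℕ | ε ≤ |(u n : ℝ) * x - (round ((u n : ℝ) * x) : ℝ)|} ∈ I₂) ∧
      ¬ (∀ ε : ℝ, 0 < ε →
        {n : ℕ | ε ≤ |(u n : ℝ) * x - (round ((u n : ℝ) * x) : ℝ)|} ∈ I₁) :=
  stmt_18_general u humono hdvd I₁ I₂ hunion₁ hsubset₁ hunion₂ hsubset₂ htrans₂ hnsub
end
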